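/- arXiv:2407.11455 — 4 statements merged into one kernel-verified Lean document; each statement's English description precedes it below -/
import Mathlib

section
/- Assume: (i) H_{S,S} is invertible and λ_min(H_{S,S}) ≥ n Λ₀ for some Λ₀ > 0; (ii) mutual incoherence: ‖H_{S^c,S} H_{S,S}^{-1}‖_∞ ≤ 1 − γ for some γ ∈ (0,1]; (iii) ‖Z‖_∞ ≤ n δ for some δ ≥ 0 with 2δ(2 − γ) < γκ; (iv) minimum signal: min_{j ∈ S} |θ*_j| > (√s / Λ₀)(δ + κ/2). Then the criterion C(θ) = (1/n)[(θ − θ*)ᵀ H (θ − θ*) − 2 Zᵀ(θ − θ*)] + κ ‖θ‖₁ admits a unique minimizer θ̂ over ℝ^d, and θ̂ satisfies: supp(θ̂) = S, sign(θ̂_j) = sign(θ*_j) for every j ∈ S, and ‖θ̂ − θ*‖_∞ ≤ (√s / Λ₀)(δ + κ/2). -/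
open Matrix Finset

private lemma sign_mul_self' (x : ℝ) : Real.sign x * x = |x| := by
  rcases lt_trichotomy x 0 with h | h | h
  · rw [Real.sign_of_neg h, abs_of_neg h]; ring
  · simp [h]
  · rw [Real.sign_of_pos h, abs_of_pos h]; ring

private lemma abs_sign_le' (x : ℝ) : |Real.sign x| ≤ 1 := by
  rcases lt_trichotomy x 0 with h | h | h
  · simp [Real.sign_of_neg h]
  · simp [h]
  · simp [Real.sign_of_pos h]

private lemma sign_add_of_abs_lt {t u : ℝ} (h : |u| < |t|) :
    Real.sign (t + u) = Real.sign t ∧ t + u ≠ 0 := by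
  rcases lt_trichotomy t 0 with ht | ht | ht
  · have h1 : t + u < 0 := by
      have := abs_lt.1 h; rw [abs_of_neg ht] at this; linarith [this.2]
    rw [Real.sign_of_neg h1, Real.sign_of_neg ht]
    exact ⟨rfl, ne_of_lt h1⟩
  · subst ht; simp at h; linarith [abs_nonneg u]
  · have h1 : 0 < t + u := by
      have := abs_lt.1 h; rw [abs_of_pos ht] at this; linarith [this.1]
    rw [Real.sign_of_pos h1, Real.sign_of_pos ht]
    exact ⟨rfl, ne_of_gt h1⟩

private lemma sum_support_eq {d : ℕ} (S : Finset (Fin d)) (F x : Fin d → ℝ)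
    (hx : ∀ j, j ∉ S → x j = 0) :
    ∑ j, F j * x j = ∑ a : {j // j ∈ S}, F a.1 * x a.1 := by
  rw [Finset.sum_coe_sort S (fun j => F j * x j)]
  refine (Finset.sum_subset (Finset.subset_univ S) ?_).symm
  intro j _ hj
  rw [hx j hj, mul_zero]

set_option maxHeartbeats 1600000 in
/-- Deterministic core of Theorem 1 (Lasso support recovery): under invertibility and a
minimum-eigenvalue bound on `H_{S,S}`, mutual incoherence, control of the noise `Z`, and a
minimum-signal condition, the penalized least-squares criterion admits a unique minimizer
`θ̂` with `supp(θ̂) = S`, `sign(θ̂_j) = sign(θ*_j)` on `S`, and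
`‖θ̂ − θ*‖_∞ ≤ (√s/Λ₀)(δ + κ/2)`. -/
theorem stmt3
    (d : ℕ) (hd : 1 ≤ d) (n : ℝ) (hn : 0 < n)
    (H : Matrix (Fin d) (Fin d) ℝ) (hHsymm : H.IsSymm)
    (hHpsd : ∀ v : Fin d → ℝ, 0 ≤ v ⬝ᵥ H.mulVec v)
    (Z : Fin d → ℝ) (κ : ℝ) (hκ : 0 < κ)
    (θs : Fin d → ℝ) (S : Finset (Fin d)) (hS : ∀ j, j ∈ S ↔ θs j ≠ 0)
    (hSne : S.Nonempty)
    (Λ₀ : ℝ) (hΛ₀ : 0 < Λ₀)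
    (HSS : Matrix {j // j ∈ S} {j // j ∈ S} ℝ)
    (hHSS : HSS = H.submatrix (fun a => a.1) (fun a => a.1))
    -- (i) invertibility and minimum eigenvalue `λ_min(H_{S,S}) ≥ n Λ₀`
    (hinv : IsUnit HSS.det)
    (hmin : ∀ v : {j // j ∈ S} → ℝ, n * Λ₀ * ∑ j, v j ^ 2 ≤ v ⬝ᵥ HSS.mulVec v)
    -- (ii) mutual incoherence: `‖H_{Sᶜ,S} H_{S,S}⁻¹‖_∞ ≤ 1 − γ`
    (γ : ℝ) (hγ0 : 0 < γ) (hγ1 : γ ≤ 1)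
    (hMI : ∀ i : {j // j ∉ S}, ∑ a : {j // j ∈ S},
        |((H.submatrix (fun b : {j // j ∉ S} => b.1) (fun a : {j // j ∈ S} => a.1)) * HSS⁻¹) i a|
          ≤ 1 - γ)
    -- (iii) noise control `‖Z‖_∞ ≤ n δ` with `2δ(2 − γ) < γκ`
    (δ : ℝ) (hδ : 0 ≤ δ) (hZ : ∀ j, |Z j| ≤ n * δ)
    (hδκ : 2 * δ * (2 - γ) < γ * κ)
    -- (iv) minimum signal
    (hMS : ∀ j ∈ S, (Real.sqrt S.card / Λ₀) * (δ + κ / 2) < |θs j|)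
    (C : (Fin d → ℝ) → ℝ)
    (hC : ∀ θ, C θ = (1 / n) * ((θ - θs) ⬝ᵥ H.mulVec (θ - θs) - 2 * (Z ⬝ᵥ (θ - θs)))
        + κ * ∑ j, |θ j|) :
    ∃ θh : Fin d → ℝ,
      (∀ θ, C θh ≤ C θ) ∧
      (∀ θ', (∀ θ, C θ' ≤ C θ) → θ' = θh) ∧
      (∀ j, θh j ≠ 0 ↔ j ∈ S) ∧
      (∀ j ∈ S, Real.sign (θh j) = Real.sign (θs j)) ∧
      (∀ j, |θh j - θs j| ≤ (Real.sqrt S.card / Λ₀) * (δ + κ / 2)) := by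
  classical
  set B : ℝ := (Real.sqrt S.card / Λ₀) * (δ + κ / 2) with hBdef
  set M : ℝ := n * (δ + κ / 2) with hMdef
  have hM0 : 0 < M := by positivity
  -- the sign vector and right-hand side on the support
  set v : {j // j ∈ S} → ℝ := fun a => Z a.1 - n * κ / 2 * Real.sign (θs a.1) with hvdef
  set w : {j // j ∈ S} → ℝ := HSS⁻¹.mulVec v with hwdef
  -- candidate minimizer
  set θh : Fin d → ℝ := fun j => θs j + (if h : j ∈ S then w ⟨j, h⟩ else 0) with hθhdef
  have hv_bound : ∀ a, |v a| ≤ M := by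
    intro a
    have h1 := hZ a.1
    have h2 := abs_sign_le' (θs a.1)
    calc |v a| ≤ |Z a.1| + |n * κ / 2 * Real.sign (θs a.1)| := abs_sub _ _
      _ ≤ n * δ + n * κ / 2 * 1 := by
          have e : |n * κ / 2 * Real.sign (θs a.1)| = n * κ / 2 * |Real.sign (θs a.1)| := by
            rw [abs_mul, abs_of_pos (show (0:ℝ) < n * κ / 2 by positivity)]
          rw [e]
          have h3 : n * κ / 2 * |Real.sign (θs a.1)| ≤ n * κ / 2 * 1 :=
            mul_le_mul_of_nonneg_left h2 (by positivity)
          exact add_le_add h1 h3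
      _ = M := by rw [hMdef]; ring
  have hHw : HSS.mulVec w = v := by
    rw [hwdef, Matrix.mulVec_mulVec, Matrix.mul_nonsing_inv _ hinv, Matrix.one_mulVec]
  -- the ℓ∞ bound on w
  have hw_bound : ∀ a, |w a| ≤ B := by
    set T : ℝ := ∑ a, w a ^ 2 with hTdef
    have hT0 : 0 ≤ T := Finset.sum_nonneg fun a _ => sq_nonneg _
    have h1 : n * Λ₀ * T ≤ w ⬝ᵥ v := by rw [← hHw]; exact hmin w
    have hwv0 : 0 ≤ w ⬝ᵥ v := le_trans (by positivity) h1
    have hCS : (w ⬝ᵥ v) ^ 2 ≤ T * ∑ a, v a ^ 2 := by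
      exact Finset.sum_mul_sq_le_sq_mul_sq _ _ _
    have hv2 : ∑ a, v a ^ 2 ≤ (S.card : ℝ) * M ^ 2 := by
      calc ∑ a, v a ^ 2 ≤ ∑ _a : {j // j ∈ S}, M ^ 2 := by
            apply Finset.sum_le_sum
            intro a _
            have := hv_bound a
            calc v a ^ 2 = |v a| ^ 2 := (sq_abs _).symm
              _ ≤ M ^ 2 := pow_le_pow_left₀ (abs_nonneg _) this 2
        _ = (S.card : ℝ) * M ^ 2 := by
            rw [Finset.sum_const, Finset.card_univ, Fintype.card_coe, nsmul_eq_mul]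
    have key : T ≤ (S.card : ℝ) * M ^ 2 / (n * Λ₀) ^ 2 := by
      rcases eq_or_lt_of_le hT0 with h0 | h0
      · rw [← h0]; positivity
      · have h2 : (n * Λ₀ * T) ^ 2 ≤ (w ⬝ᵥ v) ^ 2 := by
          apply pow_le_pow_left₀ (by positivity) h1
        have h3 : (n * Λ₀) ^ 2 * T ^ 2 ≤ T * ((S.card : ℝ) * M ^ 2) := by
          calc (n * Λ₀) ^ 2 * T ^ 2 = (n * Λ₀ * T) ^ 2 := by ring
            _ ≤ (w ⬝ᵥ v) ^ 2 := h2
            _ ≤ T * ∑ a, v a ^ 2 := hCS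
            _ ≤ T * ((S.card : ℝ) * M ^ 2) := mul_le_mul_of_nonneg_left hv2 hT0
        have h4 : (n * Λ₀) ^ 2 * T ≤ (S.card : ℝ) * M ^ 2 := by
          nlinarith [h3, h0]
        rw [le_div_iff₀ (by positivity)]
        linarith [h4]
    intro a
    have hwa : w a ^ 2 ≤ B ^ 2 := by
      have h5 : w a ^ 2 ≤ T := Finset.single_le_sum (f := fun a => w a ^ 2)
        (fun a _ => sq_nonneg _) (Finset.mem_univ a)
      have hB2 : B ^ 2 = (S.card : ℝ) * M ^ 2 / (n * Λ₀) ^ 2 := by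
        have hs : Real.sqrt (S.card) ^ 2 = (S.card : ℝ) := Real.sq_sqrt (Nat.cast_nonneg _)
        rw [hBdef, hMdef, mul_pow, div_pow, hs, mul_pow, mul_pow]
        field_simp
      rw [hB2]
      exact le_trans h5 key
    have hB0 : 0 ≤ B := by positivity
    calc |w a| = Real.sqrt (w a ^ 2) := (Real.sqrt_sq_eq_abs _).symm
      _ ≤ Real.sqrt (B ^ 2) := Real.sqrt_le_sqrt hwa
      _ = B := Real.sqrt_sq hB0
  have hB0 : 0 ≤ B := by positivity
  -- basic facts about θh
  have hθh_diff : ∀ j, θh j - θs j = if h : j ∈ S then w ⟨j, h⟩ else 0 := by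
    intro j; rw [hθhdef]; ring
  have hθh_diff_zero : ∀ j, j ∉ S → θh j - θs j = 0 := by
    intro j hj; rw [hθh_diff j, dif_neg hj]
  have hθh_bound : ∀ j, |θh j - θs j| ≤ B := by
    intro j
    rw [hθh_diff j]
    by_cases h : j ∈ S
    · rw [dif_pos h]; exact hw_bound _
    · rw [dif_neg h]; simpa using hB0
  have hθhSc : ∀ j, j ∉ S → θh j = 0 := by
    intro j hj
    have : θs j = 0 := by by_contra h; exact hj ((hS j).2 h)
    rw [hθhdef]; simp [dif_neg hj, this]
  have hθh_sign : ∀ j ∈ S, Real.sign (θh j) = Real.sign (θs j) ∧ θh j ≠ 0 := by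
    intro j hj
    have h1 : |θh j - θs j| < |θs j| := lt_of_le_of_lt (hθh_bound j) (hMS j hj)
    have := sign_add_of_abs_lt (t := θs j) (u := θh j - θs j) h1
    constructor
    · have e : θs j + (θh j - θs j) = θh j := by ring
      rw [e] at this; exact this.1
    · have e : θs j + (θh j - θs j) = θh j := by ring
      rw [e] at this; exact this.2
  -- evaluation of H (θh − θs)
  have hHe : ∀ j : Fin d, H.mulVec (θh - θs) j = ∑ a : {j // j ∈ S}, H j a.1 * w a := by
    intro j
    show ∑ k, H j k * (θh - θs) k = _
    rw [sum_support_eq S (fun k => H j k) (fun k => (θh - θs) k)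
      (fun k hk => by simp [hθh_diff_zero k hk])]
    congr 1
    funext a
    have : (θh - θs) a.1 = w a := by
      show θh a.1 - θs a.1 = w a
      rw [hθh_diff, dif_pos a.2]
    rw [this]
  set q : Fin d → ℝ := fun j => H.mulVec (θh - θs) j - Z j with hqdef
  have hqS : ∀ j (hj : j ∈ S), q j = -(n * κ / 2) * Real.sign (θs j) := by
    intro j hj
    have h1 : H.mulVec (θh - θs) j = HSS.mulVec w ⟨j, hj⟩ := by
      rw [hHe j]
      show _ = ∑ b, HSS ⟨j, hj⟩ b * w b
      congr 1
      funext b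
      rw [hHSS]
      rfl
    rw [hqdef]
    simp only
    rw [h1, hHw]
    show Z j - n * κ / 2 * Real.sign (θs j) - Z j = _
    ring
  have hqSc : ∀ j (hj : j ∉ S), |q j| < n * κ / 2 := by
    intro j hj
    have h1 : H.mulVec (θh - θs) j
        = ∑ b : {j // j ∈ S},
          ((H.submatrix (fun b : {j // j ∉ S} => b.1) (fun a : {j // j ∈ S} => a.1)) * HSS⁻¹)
            ⟨j, hj⟩ b * v b := by
      rw [hHe j]
      have hw_entry : ∀ a : {j // j ∈ S}, w a = ∑ b : {j // j ∈ S}, HSS⁻¹ a b * v b := by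
        intro a; rw [hwdef]; rfl
      calc ∑ a : {j // j ∈ S}, H j a.1 * w a
          = ∑ a : {j // j ∈ S}, ∑ b : {j // j ∈ S}, H j a.1 * (HSS⁻¹ a b * v b) := by
            apply Finset.sum_congr rfl; intro a _; rw [hw_entry a, Finset.mul_sum]
        _ = ∑ b : {j // j ∈ S}, ∑ a : {j // j ∈ S}, H j a.1 * (HSS⁻¹ a b * v b) :=
            Finset.sum_comm
        _ = _ := by
            apply Finset.sum_congr rfl; intro b _
            rw [Matrix.mul_apply, Finset.sum_mul]
            apply Finset.sum_congr rfl; intro a _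
            rw [Matrix.submatrix_apply]
            ring
    have h2 : |H.mulVec (θh - θs) j| ≤ (1 - γ) * M := by
      rw [h1]
      calc |∑ b : {j // j ∈ S}, _ * v b| ≤ ∑ b : {j // j ∈ S},
            |((H.submatrix (fun b : {j // j ∉ S} => b.1) (fun a : {j // j ∈ S} => a.1)) * HSS⁻¹)
              ⟨j, hj⟩ b * v b| := Finset.abs_sum_le_sum_abs _ _
        _ ≤ ∑ b : {j // j ∈ S},
            |((H.submatrix (fun b : {j // j ∉ S} => b.1) (fun a : {j // j ∈ S} => a.1)) * HSS⁻¹)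
              ⟨j, hj⟩ b| * M := by
            apply Finset.sum_le_sum
            intro b _
            rw [abs_mul]
            exact mul_le_mul_of_nonneg_left (hv_bound b) (abs_nonneg _)
        _ = (∑ b : {j // j ∈ S},
            |((H.submatrix (fun b : {j // j ∉ S} => b.1) (fun a : {j // j ∈ S} => a.1)) * HSS⁻¹)
              ⟨j, hj⟩ b|) * M := by rw [Finset.sum_mul]
        _ ≤ (1 - γ) * M := by
            apply mul_le_mul_of_nonneg_right (hMI ⟨j, hj⟩) hM0.le
    have h3 : |q j| ≤ (1 - γ) * M + n * δ := by
      rw [hqdef]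
      calc |H.mulVec (θh - θs) j - Z j| ≤ |H.mulVec (θh - θs) j| + |Z j| := abs_sub _ _
        _ ≤ (1 - γ) * M + n * δ := add_le_add h2 (hZ j)
    have h4 : (1 - γ) * M + n * δ < n * κ / 2 := by
      rw [hMdef]
      nlinarith
    linarith
  -- the dual certificate
  set g : Fin d → ℝ := fun j => if j ∈ S then Real.sign (θs j) else -(2 / (n * κ)) * q j
    with hgdef
  have hg_eq : ∀ j, (2 / n) * q j + κ * g j = 0 := by
    intro j
    rw [hgdef]
    by_cases hj : j ∈ S
    · simp only [if_pos hj]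
      rw [hqS j hj]
      field_simp
      ring
    · simp only [if_neg hj]
      field_simp
      ring
  have hg_le : ∀ j, |g j| ≤ 1 := by
    intro j
    rw [hgdef]
    by_cases hj : j ∈ S
    · simp only [if_pos hj]; exact abs_sign_le' _
    · simp only [if_neg hj]
      have := hqSc j hj
      rw [abs_mul, abs_neg, abs_div]
      rw [abs_of_pos (show (0:ℝ) < 2 by norm_num), abs_of_pos (by positivity : (0:ℝ) < n * κ)]
      rw [div_mul_eq_mul_div, div_le_one (by positivity)]
      linarith [this]
  have hg_lt : ∀ j, j ∉ S → |g j| < 1 := by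
    intro j hj
    rw [hgdef]
    simp only [if_neg hj]
    have := hqSc j hj
    rw [abs_mul, abs_neg, abs_div]
    rw [abs_of_pos (show (0:ℝ) < 2 by norm_num), abs_of_pos (by positivity : (0:ℝ) < n * κ)]
    rw [div_mul_eq_mul_div, div_lt_one (by positivity)]
    linarith [this]
  have hg_mul : ∀ j, g j * θh j = |θh j| := by
    intro j
    by_cases hj : j ∈ S
    · rw [hgdef]
      simp only [if_pos hj]
      rw [← (hθh_sign j hj).1]
      exact sign_mul_self' _
    · rw [hθhSc j hj]; simp
  -- key identity
  have key : ∀ θ : Fin d → ℝ, C θ = C θh + (1 / n) * ((θ - θh) ⬝ᵥ H.mulVec (θ - θh))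
      + κ * ∑ j, (|θ j| - g j * θ j) := by
    intro θ
    have hsplit : θ - θs = (θ - θh) + (θh - θs) := by funext j; simp only [Pi.sub_apply, Pi.add_apply]; ring
    have hsym : (θh - θs) ⬝ᵥ H.mulVec (θ - θh) = (θ - θh) ⬝ᵥ H.mulVec (θh - θs) := by
      rw [Matrix.dotProduct_mulVec, ← Matrix.mulVec_transpose, hHsymm.eq,
        dotProduct_comm]
    have hquad : (θ - θs) ⬝ᵥ H.mulVec (θ - θs)
        = (θ - θh) ⬝ᵥ H.mulVec (θ - θh) + (θh - θs) ⬝ᵥ H.mulVec (θh - θs)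
          + 2 * ((θ - θh) ⬝ᵥ H.mulVec (θh - θs)) := by
      rw [hsplit, Matrix.mulVec_add, dotProduct_add, add_dotProduct,
        add_dotProduct, hsym]
      ring
    have hZsplit : Z ⬝ᵥ (θ - θs) = Z ⬝ᵥ (θ - θh) + Z ⬝ᵥ (θh - θs) := by
      rw [hsplit, dotProduct_add]
    have hcross : (2 / n) * ((θ - θh) ⬝ᵥ H.mulVec (θh - θs) - Z ⬝ᵥ (θ - θh))
        = -κ * ∑ j, g j * (θ j - θh j) := by
      have e1 : (θ - θh) ⬝ᵥ H.mulVec (θh - θs) - Z ⬝ᵥ (θ - θh)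
          = ∑ j, (θ j - θh j) * q j := by
        rw [hqdef]
        show ∑ j, (θ - θh) j * H.mulVec (θh - θs) j - ∑ j, Z j * (θ - θh) j = _
        rw [← Finset.sum_sub_distrib]
        congr 1
        funext j
        show (θ j - θh j) * _ - Z j * (θ j - θh j) = _
        ring
      rw [e1, Finset.mul_sum, Finset.mul_sum]
      congr 1
      funext j
      have := hg_eq j
      have hq : (2 / n) * q j = -(κ * g j) := by linarith
      calc (2 / n) * ((θ j - θh j) * q j) = ((2 / n) * q j) * (θ j - θh j) := by ring
        _ = -(κ * g j) * (θ j - θh j) := by rw [hq]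
        _ = -κ * (g j * (θ j - θh j)) := by ring
    have habs : κ * ∑ j, |θ j| - κ * ∑ j, |θh j| - κ * ∑ j, g j * (θ j - θh j)
        = κ * ∑ j, (|θ j| - g j * θ j) := by
      have e2 : ∑ j, (|θ j| - g j * θ j) = ∑ j, (|θ j| - |θh j| - g j * (θ j - θh j)) := by
        apply Finset.sum_congr rfl
        intro j _
        have h := hg_mul j
        ring_nf
        ring_nf at h
        linarith [h]
      rw [e2, Finset.sum_sub_distrib, Finset.sum_sub_distrib]
      ring
    rw [hC θ, hC θh, hquad, hZsplit]
    have expand : (1 / n) * ((θ - θh) ⬝ᵥ H.mulVec (θ - θh) + (θh - θs) ⬝ᵥ H.mulVec (θh - θs)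
          + 2 * ((θ - θh) ⬝ᵥ H.mulVec (θh - θs))
          - 2 * (Z ⬝ᵥ (θ - θh) + Z ⬝ᵥ (θh - θs))) + κ * ∑ j, |θ j|
        = ((1 / n) * ((θh - θs) ⬝ᵥ H.mulVec (θh - θs) - 2 * (Z ⬝ᵥ (θh - θs)))
            + κ * ∑ j, |θh j|)
          + (1 / n) * ((θ - θh) ⬝ᵥ H.mulVec (θ - θh))
          + ((2 / n) * ((θ - θh) ⬝ᵥ H.mulVec (θh - θs) - Z ⬝ᵥ (θ - θh))
            + (κ * ∑ j, |θ j| - κ * ∑ j, |θh j|)) := by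
      field_simp
      ring
    rw [expand, hcross]
    have : -κ * ∑ j, g j * (θ j - θh j) + (κ * ∑ j, |θ j| - κ * ∑ j, |θh j|)
        = κ * ∑ j, (|θ j| - g j * θ j) := by
      rw [← habs]; ring
    rw [this]
  -- nonnegativity of the two terms
  have hterm1 : ∀ θ : Fin d → ℝ, 0 ≤ (1 / n) * ((θ - θh) ⬝ᵥ H.mulVec (θ - θh)) := by
    intro θ
    apply mul_nonneg (by positivity) (hHpsd _)
  have hterm2 : ∀ (θ : Fin d → ℝ) (j : Fin d), 0 ≤ |θ j| - g j * θ j := by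
    intro θ j
    have h1 : g j * θ j ≤ |g j * θ j| := le_abs_self _
    have h2 : |g j * θ j| = |g j| * |θ j| := abs_mul _ _
    have h3 : |g j| * |θ j| ≤ 1 * |θ j| :=
      mul_le_mul_of_nonneg_right (hg_le j) (abs_nonneg _)
    nlinarith
  -- minimality
  have hmin' : ∀ θ, C θh ≤ C θ := by
    intro θ
    rw [key θ]
    have h2 : 0 ≤ κ * ∑ j, (|θ j| - g j * θ j) :=
      mul_nonneg hκ.le (Finset.sum_nonneg fun j _ => hterm2 θ j)
    linarith [hterm1 θ]
  refine ⟨θh, hmin', ?_, ?_, fun j hj => (hθh_sign j hj).1, hθh_bound⟩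
  · -- uniqueness
    intro θ' hθ'
    have heq : C θ' = C θh := le_antisymm (hθ' θh) (hmin' θ')
    have hkey := key θ'
    rw [heq] at hkey
    have h0 : (1 / n) * ((θ' - θh) ⬝ᵥ H.mulVec (θ' - θh))
        + κ * ∑ j, (|θ' j| - g j * θ' j) = 0 := by linarith
    have h2 : 0 ≤ κ * ∑ j, (|θ' j| - g j * θ' j) :=
      mul_nonneg hκ.le (Finset.sum_nonneg fun j _ => hterm2 θ' j)
    have hA : (1 / n) * ((θ' - θh) ⬝ᵥ H.mulVec (θ' - θh)) = 0 := by
      linarith [hterm1 θ']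
    have hBsum : ∑ j, (|θ' j| - g j * θ' j) = 0 := by
      have : κ * ∑ j, (|θ' j| - g j * θ' j) = 0 := by linarith [hterm1 θ']
      exact (mul_eq_zero.1 this).resolve_left (ne_of_gt hκ)
    have hBzero : ∀ j, |θ' j| - g j * θ' j = 0 := by
      intro j
      have := (Finset.sum_eq_zero_iff_of_nonneg (fun j _ => hterm2 θ' j)).1 hBsum
      exact this j (Finset.mem_univ j)
    -- θ' vanishes off S
    have hθ'Sc : ∀ j, j ∉ S → θ' j = 0 := by
      intro j hj
      by_contra hne
      have h1 : |θ' j| = g j * θ' j := by linarith [hBzero j]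
      have h2 : g j * θ' j ≤ |g j| * |θ' j| := by
        calc g j * θ' j ≤ |g j * θ' j| := le_abs_self _
          _ = |g j| * |θ' j| := abs_mul _ _
      have h3 : |g j| * |θ' j| < 1 * |θ' j| := by
        apply mul_lt_mul_of_pos_right (hg_lt j hj)
        exact abs_pos.2 hne
      rw [one_mul] at h3
      linarith
    -- the difference u is supported on S
    set u : Fin d → ℝ := fun j => θ' j - θh j with hudef
    have huSc : ∀ j, j ∉ S → u j = 0 := by
      intro j hj
      rw [hudef]
      simp [hθ'Sc j hj, hθhSc j hj]
    have hquad0 : (θ' - θh) ⬝ᵥ H.mulVec (θ' - θh) = 0 := by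
      have hnne : (1 : ℝ) / n ≠ 0 := by positivity
      exact (mul_eq_zero.1 hA).resolve_left hnne
    set uS : {j // j ∈ S} → ℝ := fun a => u a.1 with huSdef
    have hrestrict : (θ' - θh) ⬝ᵥ H.mulVec (θ' - θh) = uS ⬝ᵥ HSS.mulVec uS := by
      have e0 : ∀ j, (θ' - θh) j = u j := fun j => rfl
      show ∑ j, (θ' - θh) j * H.mulVec (θ' - θh) j = _
      have e1 : ∀ j, H.mulVec (θ' - θh) j = ∑ k, H j k * u k := by
        intro j; rfl
      calc ∑ j, (θ' - θh) j * H.mulVec (θ' - θh) j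
          = ∑ j, H.mulVec (θ' - θh) j * u j := by
            apply Finset.sum_congr rfl; intro j _; rw [e0 j]; ring
        _ = ∑ a : {j // j ∈ S}, H.mulVec (θ' - θh) a.1 * u a.1 :=
            sum_support_eq S _ u huSc
        _ = ∑ a : {j // j ∈ S}, (HSS.mulVec uS) a * uS a := by
            apply Finset.sum_congr rfl
            intro a _
            congr 1
            rw [e1 a.1]
            show _ = ∑ b, HSS a b * uS b
            rw [sum_support_eq S (fun k => H a.1 k) u huSc]
            apply Finset.sum_congr rfl
            intro b _
            rw [hHSS]
            rfl
        _ = uS ⬝ᵥ HSS.mulVec uS := by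
            show _ = ∑ a, uS a * (HSS.mulVec uS) a
            apply Finset.sum_congr rfl
            intro a _
            ring
    have hsum0 : ∑ a, uS a ^ 2 = 0 := by
      have h1 := hmin uS
      rw [← hrestrict, hquad0] at h1
      have h2 : 0 ≤ ∑ a, uS a ^ 2 := Finset.sum_nonneg fun a _ => sq_nonneg _
      nlinarith [h1, h2, mul_pos hn hΛ₀]
    have huS0 : ∀ a : {j // j ∈ S}, uS a = 0 := by
      intro a
      have := (Finset.sum_eq_zero_iff_of_nonneg (fun a _ => sq_nonneg (uS a))).1 hsum0
      have h := this a (Finset.mem_univ a)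
      exact pow_eq_zero_iff (n := 2) (by norm_num) |>.1 h
    funext j
    by_cases hj : j ∈ S
    · have := huS0 ⟨j, hj⟩
      rw [huSdef] at this
      simp only at this
      rw [hudef] at this
      simp only at this
      linarith
    · rw [hθ'Sc j hj, hθhSc j hj]
  · -- support characterization
    intro j
    constructor
    · intro hne
      by_contra hj
      exact hne (hθhSc j hj)
    · intro hj
      exact (hθh_sign j hj).2
end

section
/- Suppose θ̂ ∈ ℝ^N and ẑ ∈ ℝ^N satisfy: ∇R(θ̂) + κ ẑ = 0; ẑ_j = 0 for every j ∉ J; |ẑ_j| ≤ 1 and ẑ_j θ̂_j = |θ̂_j| for every j ∈ J; and there is a subset S ⊆ J such that θ̂_j = 0 and |ẑ_j| < 1 for every j ∈ J \ S. Then every minimizer θ̃ of C over ℝ^N satisfies θ̃_j = 0 for all j ∈ J \ S. -/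
open Finset

private lemma inner_sum_J {N : ℕ} (J : Finset (Fin N)) (zh θ : EuclideanSpace ℝ (Fin N))
    (hzoffJ : ∀ j ∉ J, zh j = 0) :
    (inner ℝ zh θ : ℝ) = ∑ j ∈ J, zh j * θ j := by
  rw [PiLp.inner_apply]
  simp only [RCLike.inner_apply, conj_trivial]
  rw [Finset.sum_congr rfl (fun i _ => mul_comm (θ i) (zh i))]
  rw [← Finset.sum_subset (Finset.subset_univ J)]
  intro x _ hx
  rw [hzoffJ x hx, zero_mul]

/-- Primal–dual witness lemma (Step 2 of the proof of Theorem 1): if `(θ̂, ẑ)` satisfies the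
zero-subgradient equation `∇R(θ̂) + κ ẑ = 0` with `ẑ` dual feasible and strictly dual feasible
off a subset `S` of the penalized set `J`, then every minimizer of the penalized criterion
vanishes on `J \ S`. -/
theorem stmt4
    (N : ℕ) (hN : 1 ≤ N)
    (R : EuclideanSpace ℝ (Fin N) → ℝ)
    (hconv : ConvexOn ℝ Set.univ R)
    (gradR : EuclideanSpace ℝ (Fin N) → EuclideanSpace ℝ (Fin N))
    (hgrad : ∀ θ, HasGradientAt R (gradR θ) θ)
    (κ : ℝ) (hκ : 0 < κ)
    (J : Finset (Fin N))
    (C : EuclideanSpace ℝ (Fin N) → ℝ)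
    (hC : ∀ θ, C θ = R θ + κ * ∑ j ∈ J, |θ j|)
    (θh zh : EuclideanSpace ℝ (Fin N))
    (hstat : gradR θh + κ • zh = 0)
    (hzoffJ : ∀ j ∉ J, zh j = 0)
    (hz1 : ∀ j ∈ J, |zh j| ≤ 1)
    (hzθ : ∀ j ∈ J, zh j * θh j = |θh j|)
    (S : Finset (Fin N)) (hSJ : S ⊆ J)
    (hstrict : ∀ j ∈ J \ S, θh j = 0 ∧ |zh j| < 1) :
    ∀ θt : EuclideanSpace ℝ (Fin N), (∀ θ, C θt ≤ C θ) → ∀ j ∈ J \ S, θt j = 0 := by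
  intro θt hmin
  set G : EuclideanSpace ℝ (Fin N) → ℝ := fun θ => R θ + κ * (inner ℝ zh θ : ℝ) with hG
  -- G is convex
  have hGconv : ConvexOn ℝ Set.univ G := by
    refine ⟨convex_univ, ?_⟩
    intro x _ y _ a b ha hb hab
    have hR := hconv.2 (Set.mem_univ x) (Set.mem_univ y) ha hb hab
    simp only [hG, smul_eq_mul, inner_add_right, inner_smul_right, RCLike.ofReal_real_eq_id,
      id_eq] at *
    nlinarith [hR]
  -- θh minimizes G since its gradient vanishes there
  have hGmin : ∀ θ, G θh ≤ G θ := by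
    intro θ
    set v : EuclideanSpace ℝ (Fin N) := θ - θh with hv
    set ℓ : ℝ → EuclideanSpace ℝ (Fin N) := fun t => θh + t • v with hℓ
    have hℓd : ∀ t : ℝ, HasDerivAt ℓ v t := by
      intro t
      have h1 : HasDerivAt (fun t : ℝ => t • v) ((1 : ℝ) • v) t :=
        (hasDerivAt_id t).smul_const v
      rw [one_smul] at h1
      exact h1.const_add θh
    -- gradient of G at θh
    have hinner : HasFDerivAt (fun θ' => κ * (inner ℝ zh θ' : ℝ)) (κ • innerSL ℝ zh) θh :=
      ((innerSL ℝ zh).hasFDerivAt).const_mul κ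
    have hFG : HasFDerivAt G ((InnerProductSpace.toDual ℝ _ (gradR θh)) + κ • innerSL ℝ zh)
        θh := ((hgrad θh).hasFDerivAt).add hinner
    have hℓ0 : ℓ 0 = θh := by simp [hℓ]
    have hFG' : HasFDerivAt G ((InnerProductSpace.toDual ℝ (EuclideanSpace ℝ (Fin N))
        (gradR θh)) + κ • innerSL ℝ zh) (ℓ 0) := by rw [hℓ0]; exact hFG
    have hφd : HasDerivAt (fun t => G (ℓ t))
        (((InnerProductSpace.toDual ℝ (EuclideanSpace ℝ (Fin N)) (gradR θh))
          + κ • innerSL ℝ zh) v) 0 := hFG'.comp_hasDerivAt 0 (hℓd 0)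
    have hval : (((InnerProductSpace.toDual ℝ _ (gradR θh)) + κ • innerSL ℝ zh) v) = 0 := by
      have : (((InnerProductSpace.toDual ℝ _ (gradR θh)) + κ • innerSL ℝ zh) v)
          = (inner ℝ (gradR θh + κ • zh) v : ℝ) := by
        simp [InnerProductSpace.toDual_apply_apply, inner_add_left, inner_smul_left]
      rw [this, hstat, inner_zero_left]
    rw [hval] at hφd
    -- convexity of t ↦ G (ℓ t)
    have hφconv : ConvexOn ℝ Set.univ (fun t => G (ℓ t)) := by
      refine ⟨convex_univ, ?_⟩
      intro x _ y _ a b ha hb hab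
      have key : ℓ (a * x + b * y) = a • ℓ x + b • ℓ y := by
        simp only [hℓ]
        match_scalars
        · linarith
        · ring
      show G (ℓ (a * x + b * y)) ≤ a • G (ℓ x) + b • G (ℓ y)
      rw [key]
      exact hGconv.2 (Set.mem_univ _) (Set.mem_univ _) ha hb hab
    have hs := hφconv.le_slope_of_hasDerivAt (Set.mem_univ (0 : ℝ)) (Set.mem_univ (1 : ℝ))
      one_pos hφd
    have hℓ1 : ℓ 1 = θ := by simp [hℓ, hv]
    rw [slope_def_field] at hs
    simp only [hℓ0, hℓ1] at hs
    have : (0 : ℝ) ≤ G θ - G θh := by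
      have := hs
      field_simp at this
      linarith
    linarith
  -- bookkeeping on sums
  set A : ℝ := ∑ j ∈ J, zh j * θt j with hA
  set B : ℝ := ∑ j ∈ J, |θt j| with hB
  have htermle : ∀ j ∈ J, zh j * θt j ≤ |θt j| := by
    intro j hj
    calc zh j * θt j ≤ |zh j * θt j| := le_abs_self _
      _ = |zh j| * |θt j| := abs_mul _ _
      _ ≤ 1 * |θt j| := mul_le_mul_of_nonneg_right (hz1 j hj) (abs_nonneg _)
      _ = |θt j| := one_mul _
  have hAB : A ≤ B := Finset.sum_le_sum htermle
  have h1 : C θh = G θh := by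
    rw [hC, hG]
    congr 1
    rw [inner_sum_J J zh θh hzoffJ]
    congr 1
    exact (Finset.sum_congr rfl hzθ).symm
  have h3 : G θt = R θt + κ * A := by
    show R θt + κ * (inner ℝ zh θt : ℝ) = R θt + κ * A
    rw [inner_sum_J J zh θt hzoffJ]
  have h6 : C θt ≤ C θh := hmin θh
  have h2 : G θh ≤ G θt := hGmin θt
  have h5 : C θt = R θt + κ * B := hC θt
  -- equality of A and B
  have hBA : B ≤ A := by nlinarith
  have hABeq : A = B := le_antisymm hAB hBA
  -- each term is tight
  have hterm0 : ∀ j ∈ J, |θt j| - zh j * θt j = 0 := by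
    have hsum0 : ∑ j ∈ J, (|θt j| - zh j * θt j) = 0 := by
      rw [Finset.sum_sub_distrib, ← hB, ← hA, hABeq, sub_self]
    intro j hj
    exact (Finset.sum_eq_zero_iff_of_nonneg
      (fun i hi => by linarith [htermle i hi])).1 hsum0 j hj
  intro j hj
  obtain ⟨-, hzj⟩ := hstrict j hj
  have hjJ : j ∈ J := (Finset.mem_sdiff.1 hj).1
  by_contra hne
  have hpos : 0 < |θt j| := abs_pos.2 hne
  have heq : |θt j| = zh j * θt j := by linarith [hterm0 j hjJ]
  have : zh j * θt j ≤ |zh j| * |θt j| := by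
    calc zh j * θt j ≤ |zh j * θt j| := le_abs_self _
      _ = |zh j| * |θt j| := abs_mul _ _
  nlinarith
end

section
/- Let p₀ > 0 and let p, p' ∈ ℝ^K be probability vectors with min_k p_k ≥ p₀ and min_k p'_k ≥ p₀. Then for every x ∈ ℝ^K, Σ_{k=1}^K |φ^p_k(x) − φ^{p'}_k(x)| ≤ (K/p₀) Σ_{k=1}^K |p_k − p'_k|. -/
/-- Lipschitz bound of the weighted softmax in the mixture weights: if `p, p'` are probability
vectors with entries bounded below by `p₀ > 0`, then for all scores `x`,
`∑_k |φ^p_k(x) − φ^{p'}_k(x)| ≤ (K/p₀) ∑_k |p_k − p'_k|`. -/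
theorem stmt10
    (K : ℕ) (hK : 1 ≤ K) (p₀ : ℝ) (hp₀ : 0 < p₀)
    (p p' : Fin K → ℝ)
    (hp : ∀ k, 0 < p k) (hsum : ∑ k, p k = 1) (hpmin : ∀ k, p₀ ≤ p k)
    (hp' : ∀ k, 0 < p' k) (hsum' : ∑ k, p' k = 1) (hpmin' : ∀ k, p₀ ≤ p' k)
    (φ : (Fin K → ℝ) → (Fin K → ℝ) → Fin K → ℝ)
    (hφ : ∀ q x k, φ q x k = q k * Real.exp (x k) / ∑ j, q j * Real.exp (x j))
    (x : Fin K → ℝ) :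
    ∑ k, |φ p x k - φ p' x k| ≤ ((K : ℝ) / p₀) * ∑ k, |p k - p' k| := by
  classical
  haveI : Nonempty (Fin K) := Fin.pos_iff_nonempty.mp (by omega)
  set E : Fin K → ℝ := fun k => Real.exp (x k) with hEdef
  have hEpos : ∀ k, 0 < E k := fun k => Real.exp_pos _
  set S : ℝ := ∑ j, p j * E j with hSdef
  set S' : ℝ := ∑ j, p' j * E j with hS'def
  have hSpos : 0 < S :=
    Finset.sum_pos (fun j _ => mul_pos (hp j) (hEpos j)) Finset.univ_nonempty
  have hS'pos : 0 < S' :=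
    Finset.sum_pos (fun j _ => mul_pos (hp' j) (hEpos j)) Finset.univ_nonempty
  have hEle : ∀ j, E j / S' ≤ 1 / p₀ := by
    intro j
    rw [div_le_div_iff₀ hS'pos hp₀]
    have h1 : p₀ * E j ≤ p' j * E j :=
      mul_le_mul_of_nonneg_right (hpmin' j) (hEpos j).le
    have h2 : p' j * E j ≤ S' :=
      Finset.single_le_sum (fun i _ => (mul_pos (hp' i) (hEpos i)).le) (Finset.mem_univ j)
    nlinarith
  set D : ℝ := ∑ k, |p k - p' k| with hDdef
  have hDnn : 0 ≤ D := Finset.sum_nonneg fun k _ => abs_nonneg _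
  -- difference of denominators
  have hSdiff : |S - S'| / S' ≤ D / p₀ := by
    have h1 : |S - S'| ≤ ∑ j, |p j - p' j| * E j := by
      rw [hSdef, hS'def, ← Finset.sum_sub_distrib]
      refine (Finset.abs_sum_le_sum_abs _ _).trans ?_
      apply Finset.sum_le_sum
      intro j _
      rw [← sub_mul, abs_mul, abs_of_pos (hEpos j)]
    have h2 : (∑ j, |p j - p' j| * E j) / S' ≤ D / p₀ := by
      rw [Finset.sum_div, hDdef, Finset.sum_div]
      apply Finset.sum_le_sum
      intro j _
      rw [mul_div_assoc, div_eq_mul_one_div (|p j - p' j|) p₀]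
      exact mul_le_mul_of_nonneg_left (hEle j) (abs_nonneg _)
    calc |S - S'| / S' ≤ (∑ j, |p j - p' j| * E j) / S' := by gcongr
      _ ≤ D / p₀ := h2
  -- per-term bound
  have hterm : ∀ k, |φ p x k - φ p' x k| ≤
      (p k * E k / S) * (|S - S'| / S') + |p k - p' k| * (E k / S') := by
    intro k
    have hrw : φ p x k - φ p' x k =
        (p k * E k / S) * ((S' - S) / S') + (p k - p' k) * (E k / S') := by
      rw [hφ, hφ]
      change p k * E k / S - p' k * E k / S' = _
      field_simp
      ring
    rw [hrw]
    refine (abs_add_le _ _).trans ?_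
    gcongr
    · rw [abs_mul]
      have h1 : |p k * E k / S| = p k * E k / S :=
        abs_of_pos (div_pos (mul_pos (hp k) (hEpos k)) hSpos)
      have h2 : |(S' - S) / S'| = |S - S'| / S' := by
        rw [abs_div, abs_of_pos hS'pos, abs_sub_comm]
      rw [h1, h2]
    · rw [abs_mul]
      have : |E k / S'| = E k / S' := abs_of_pos (div_pos (hEpos k) hS'pos)
      rw [this]
  have hsum1 : ∑ k, (p k * E k / S) = 1 := by
    rw [← Finset.sum_div, ← hSdef, div_self hSpos.ne']
  have hmain : ∑ k, |φ p x k - φ p' x k| ≤ 2 * (D / p₀) := by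
    calc ∑ k, |φ p x k - φ p' x k|
        ≤ ∑ k, ((p k * E k / S) * (|S - S'| / S') + |p k - p' k| * (E k / S')) :=
          Finset.sum_le_sum fun k _ => hterm k
      _ = (∑ k, p k * E k / S) * (|S - S'| / S') + ∑ k, |p k - p' k| * (E k / S') := by
          rw [Finset.sum_add_distrib, ← Finset.sum_mul]
      _ ≤ 1 * (D / p₀) + ∑ k, |p k - p' k| * (1 / p₀) := by
          apply add_le_add
          · rw [hsum1]; exact mul_le_mul_of_nonneg_left hSdiff one_pos.le |>.trans (by rw [one_mul])
          · exact Finset.sum_le_sum fun k _ =>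
              mul_le_mul_of_nonneg_left (hEle k) (abs_nonneg _)
      _ = D / p₀ + D / p₀ := by
          rw [one_mul, ← Finset.sum_mul, ← hDdef]; ring
      _ = 2 * (D / p₀) := by ring
  rcases eq_or_lt_of_le hK with hK1 | hK2
  · -- K = 1 : both softmax values equal 1
    have hzero : ∀ k, φ p x k - φ p' x k = 0 := by
      intro k
      have hall : ∀ (q : Fin K → ℝ), (∀ j, 0 < q j) → φ q x k = 1 := by
        intro q hq
        rw [hφ]
        have : (∑ j, q j * Real.exp (x j)) = q k * Real.exp (x k) := by
          have : (Finset.univ : Finset (Fin K)) = {k} := by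
            apply Finset.eq_singleton_iff_unique_mem.mpr
            exact ⟨Finset.mem_univ k, fun y _ => by omega⟩
          rw [this, Finset.sum_singleton]
        rw [this]
        exact div_self (mul_pos (hq k) (Real.exp_pos _)).ne'
      rw [hall p hp, hall p' hp', sub_self]
    have : ∑ k, |φ p x k - φ p' x k| = 0 := by
      simp [hzero]
    rw [this]
    positivity
  · -- K ≥ 2
    refine hmain.trans ?_
    have h2K : (2 : ℝ) ≤ K := by exact_mod_cast hK2
    have : 2 * D ≤ (K : ℝ) * D := mul_le_mul_of_nonneg_right h2K hDnn
    rw [div_mul_eq_mul_div]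
    rw [mul_div_assoc']
    gcongr
end

section
/- Let b, c > 0. There exists a constant C > 0, depending only on b and c, with the following property: for every integer n ≥ 1, every nonempty finite index set F, every sequence W^{(1)}, …, W^{(n)} of i.i.d. random variables with values in a measurable space 𝒲, and every family (ℓ_f)_{f ∈ F} of measurable functions ℓ_f : 𝒲 → ℝ such that for each f ∈ F one has |ℓ_f(w)| ≤ b for all w, D_f := E[ℓ_f(W^{(1)})] ≥ 0 and Var(ℓ_f(W^{(1)})) ≤ c · D_f, it holds that E[ max_{f ∈ F} ( D_f − (2/n) Σ_{i=1}^n ℓ_f(W^{(i)}) ) ] ≤ C (log|F| + 1) / n. -/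
open MeasureTheory ProbabilityTheory Real

private lemma integrable_of_abs_le' {Ω : Type} [MeasurableSpace Ω] {μ : Measure Ω}
    [IsFiniteMeasure μ] {g : Ω → ℝ} (hg : Measurable g) {B : ℝ} (h : ∀ ω, |g ω| ≤ B) :
    Integrable g μ :=
  (integrable_const B).mono' hg.aestronglyMeasurable
    (Filter.Eventually.of_forall (fun ω => by simpa using h ω))

set_option maxHeartbeats 1000000 in
/-- Finite-class empirical-risk deviation bound (final step of the proof of Theorem 2):
for every `b, c > 0` there is a constant `C > 0` such that for every `n ≥ 1`, every i.i.d.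
sample `W^{(1)}, …, W^{(n)}` and every finite family `(ℓ_f)_{f ∈ F}` of `[−b, b]`-valued
measurable losses with nonnegative means `D_f` satisfying the Bernstein condition
`Var(ℓ_f) ≤ c D_f`, one has `E[max_f (D_f − (2/n) ∑_i ℓ_f(W^{(i)}))] ≤ C (log|F| + 1)/n`. -/
theorem stmt14 (b c : ℝ) (hb : 0 < b) (hc : 0 < c) :
    ∃ C : ℝ, 0 < C ∧
      ∀ (n : ℕ) (hn : 1 ≤ n)
        (Ω : Type) [MeasurableSpace Ω] (μ : Measure Ω) [IsProbabilityMeasure μ]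
        (𝒲 : Type) [m𝒲 : MeasurableSpace 𝒲]
        (F : Type) [Fintype F] [Nonempty F]
        (W : Fin n → Ω → 𝒲) (hWmeas : ∀ i, Measurable (W i))
        (hindep : iIndepFun W μ)
        (hident : ∀ i, Measure.map (W i) μ = Measure.map (W ⟨0, hn⟩) μ)
        (ℓ : F → 𝒲 → ℝ) (hℓmeas : ∀ f, Measurable (ℓ f))
        (hℓbdd : ∀ f w, |ℓ f w| ≤ b)
        (D : F → ℝ) (hD : ∀ f, D f = ∫ ω, ℓ f (W ⟨0, hn⟩ ω) ∂μ)
        (hD0 : ∀ f, 0 ≤ D f)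
        (hvar : ∀ f, variance (fun ω => ℓ f (W ⟨0, hn⟩ ω)) μ ≤ c * D f),
        ∫ ω, (⨆ f : F, (D f - (2 / (n : ℝ)) * ∑ i, ℓ f (W i ω))) ∂μ
          ≤ C * (Real.log (Fintype.card F) + 1) / n := by
  have hcb : (0:ℝ) < c + b := by linarith
  set t : ℝ := min (1/b) (1/(2*(c+b))) with ht_def
  have ht : 0 < t := lt_min (by positivity) (by positivity)
  have htb : t * b ≤ 1 := by
    have h1 : t ≤ 1/b := min_le_left _ _
    calc t * b ≤ (1/b) * b := by nlinarith
    _ = 1 := by field_simp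
  have htcb : t * (c+b) ≤ 1/2 := by
    have h1 : t ≤ 1/(2*(c+b)) := min_le_right _ _
    calc t * (c+b) ≤ (1/(2*(c+b))) * (c+b) := by nlinarith
    _ = 1/2 := by field_simp
  refine ⟨2/t, by positivity, ?_⟩
  intro n hn Ω _ μ _ 𝒲 m𝒲 F _ _ W hWmeas hindep hident ℓ hℓmeas hℓbdd D hD hD0 hvar
  have hnpos : (0:ℝ) < n := by exact_mod_cast hn
  set i0 : Fin n := ⟨0, hn⟩ with hi0
  set L : ℝ := t * n / 2 with hL_def
  have hL : 0 < L := by positivity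
  -- the random variables
  set X : F → Ω → ℝ := fun f ω => D f - (2 / (n : ℝ)) * ∑ i, ℓ f (W i ω) with hX_def
  have hYmeas : ∀ f i, Measurable (fun ω => ℓ f (W i ω)) :=
    fun f i => (hℓmeas f).comp (hWmeas i)
  have hYint : ∀ f i, Integrable (fun ω => ℓ f (W i ω)) μ :=
    fun f i => integrable_of_abs_le' (hYmeas f i) (fun ω => hℓbdd f _)
  have hDb : ∀ f, D f ≤ b := by
    intro f
    rw [hD f]
    calc ∫ ω, ℓ f (W i0 ω) ∂μ ≤ ∫ _, b ∂μ :=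
          integral_mono (hYint f i0) (integrable_const b)
            (fun ω => (abs_le.1 (hℓbdd f _)).2)
    _ = b := by simp
  -- second moment bound
  have hsq : ∀ f, ∫ ω, (ℓ f (W i0 ω))^2 ∂μ ≤ (c + b) * D f := by
    intro f
    have hmem : MemLp (fun ω => ℓ f (W i0 ω)) 2 μ :=
      MemLp.of_bound (hYmeas f i0).aestronglyMeasurable b
        (Filter.Eventually.of_forall (fun ω => by simpa [Real.norm_eq_abs] using hℓbdd f _))
    have hv := variance_eq_sub hmem
    have h2 : (∫ ω, (ℓ f (W i0 ω))^2 ∂μ)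
        = variance (fun ω => ℓ f (W i0 ω)) μ + (D f)^2 := by
      rw [hv, hD f]; ring_nf; simp [Pi.pow_apply]
    rw [h2]
    have := hvar f
    have hD2 : (D f)^2 ≤ b * D f := by nlinarith [hD0 f, hDb f]
    nlinarith
  -- per-variable mgf bound at index i0
  have key0 : ∀ f, ∫ ω, exp (-t * ℓ f (W i0 ω)) ∂μ ≤ exp (-(t/2) * D f) := by
    intro f
    have hpt : ∀ ω, exp (-t * ℓ f (W i0 ω))
        ≤ 1 + (-t * ℓ f (W i0 ω)) + t^2 * (ℓ f (W i0 ω))^2 := by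
      intro ω
      set y := ℓ f (W i0 ω) with hy
      have hyb : |y| ≤ b := hℓbdd f _
      have habs : |(-t) * y| ≤ 1 := by
        rw [abs_mul, abs_neg, abs_of_pos ht]
        calc t * |y| ≤ t * b := by nlinarith
        _ ≤ 1 := htb
      have := Real.abs_exp_sub_one_sub_id_le habs
      have h1 : exp (-t * y) - 1 - (-t * y) ≤ ((-t) * y)^2 :=
        le_trans (le_abs_self _) (by simpa using this)
      nlinarith [h1]
    have hint1 : Integrable (fun ω => exp (-t * ℓ f (W i0 ω))) μ := by
      apply integrable_of_abs_le' (((hYmeas f i0).const_mul (-t)).exp) (B := exp (t*b))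
      intro ω
      rw [abs_of_pos (exp_pos _)]
      apply Real.exp_le_exp.2
      have := (abs_le.1 (hℓbdd f (W i0 ω))).1
      nlinarith [hℓbdd f (W i0 ω), abs_le.1 (hℓbdd f (W i0 ω))]
    have hint2 : Integrable (fun ω => (ℓ f (W i0 ω))^2) μ := by
      apply integrable_of_abs_le' ((hYmeas f i0).pow_const 2) (B := b^2)
      intro ω
      rw [abs_of_nonneg (sq_nonneg _)]
      nlinarith [hℓbdd f (W i0 ω), abs_nonneg (ℓ f (W i0 ω)), sq_abs (ℓ f (W i0 ω))]
    have hint3 : Integrable (fun ω => 1 + (-t * ℓ f (W i0 ω)) + t^2 * (ℓ f (W i0 ω))^2) μ :=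
      ((integrable_const 1).add ((hYint f i0).const_mul (-t))).add (hint2.const_mul (t^2))
    calc ∫ ω, exp (-t * ℓ f (W i0 ω)) ∂μ
        ≤ ∫ ω, (1 + (-t * ℓ f (W i0 ω)) + t^2 * (ℓ f (W i0 ω))^2) ∂μ :=
          integral_mono hint1 hint3 hpt
    _ = 1 + (-t * D f) + t^2 * ∫ ω, (ℓ f (W i0 ω))^2 ∂μ := by
          have hi4 : Integrable (fun ω => 1 + (-t * ℓ f (W i0 ω))) μ :=
            (integrable_const 1).add ((hYint f i0).const_mul (-t))
          have e1 : ∫ ω, (1 + (-t * ℓ f (W i0 ω)) + t^2 * (ℓ f (W i0 ω))^2) ∂μ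
              = (∫ ω, (1 + (-t * ℓ f (W i0 ω))) ∂μ) + ∫ ω, t^2 * (ℓ f (W i0 ω))^2 ∂μ :=
            integral_add hi4 (hint2.const_mul (t^2))
          have e2 : ∫ ω, (1 + (-t * ℓ f (W i0 ω))) ∂μ
              = (∫ _, (1:ℝ) ∂μ) + ∫ ω, -t * ℓ f (W i0 ω) ∂μ :=
            integral_add (integrable_const 1) ((hYint f i0).const_mul (-t))
          have e3 : ∫ ω, -t * ℓ f (W i0 ω) ∂μ = -t * ∫ ω, ℓ f (W i0 ω) ∂μ :=
            integral_const_mul _ _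
          have e4 : ∫ ω, t^2 * (ℓ f (W i0 ω))^2 ∂μ = t^2 * ∫ ω, (ℓ f (W i0 ω))^2 ∂μ :=
            integral_const_mul _ _
          rw [e1, e2, e3, e4, ← hD f]
          simp
    _ ≤ 1 + (-(t/2) * D f) := by
          have h1 : t^2 * ∫ ω, (ℓ f (W i0 ω))^2 ∂μ ≤ t^2 * ((c+b) * D f) := by
            have := hsq f; nlinarith [sq_nonneg t]
          have h2 := mul_le_mul_of_nonneg_right htcb (mul_nonneg ht.le (hD0 f))
          nlinarith [hD0 f, ht]
    _ ≤ exp (-(t/2) * D f) := by linarith [Real.add_one_le_exp (-(t/2) * D f)]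
  -- identical distribution: mgf at any index equals at i0
  have hmap : ∀ f i, ∫ ω, exp (-t * ℓ f (W i ω)) ∂μ = ∫ ω, exp (-t * ℓ f (W i0 ω)) ∂μ := by
    intro f i
    have hm : AEStronglyMeasurable (fun w => exp (-t * ℓ f w)) (Measure.map (W i) μ) :=
      (((hℓmeas f).const_mul (-t)).exp).aestronglyMeasurable
    have hm0 : AEStronglyMeasurable (fun w => exp (-t * ℓ f w)) (Measure.map (W i0) μ) :=
      (((hℓmeas f).const_mul (-t)).exp).aestronglyMeasurable
    have e1 : ∫ w, exp (-t * ℓ f w) ∂(Measure.map (W i) μ)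
        = ∫ ω, exp (-t * ℓ f (W i ω)) ∂μ := integral_map (hWmeas i).aemeasurable hm
    have e0 : ∫ w, exp (-t * ℓ f w) ∂(Measure.map (W i0) μ)
        = ∫ ω, exp (-t * ℓ f (W i0 ω)) ∂μ := integral_map (hWmeas i0).aemeasurable hm0
    rw [← e1, hident i, e0]
  -- mgf of the sum
  have keysum : ∀ f, ∫ ω, exp (-t * ∑ i, ℓ f (W i ω)) ∂μ ≤ exp (-(L * D f)) := by
    intro f
    have hind : iIndepFun
        (fun i => ℓ f ∘ W i) μ := hindep.comp (fun _ => ℓ f) (fun _ => hℓmeas f)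
    have hmgf := hind.mgf_sum (t := -t) (fun i => hYmeas f i) Finset.univ
    have hsum : ∀ ω, (∑ i : Fin n, (ℓ f ∘ W i)) ω = ∑ i, ℓ f (W i ω) := by
      intro ω; simp [Finset.sum_apply]
    have hL1 : mgf (∑ i : Fin n, (ℓ f ∘ W i)) μ (-t)
        = ∫ ω, exp (-t * ∑ i, ℓ f (W i ω)) ∂μ := by
      unfold mgf
      exact integral_congr_ae (Filter.Eventually.of_forall fun ω => by simp only [hsum])
    have hL2 : ∀ i : Fin n, mgf (ℓ f ∘ W i) μ (-t) = ∫ ω, exp (-t * ℓ f (W i ω)) ∂μ := by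
      intro i; unfold mgf; rfl
    rw [← hL1, hmgf]
    calc (∏ i : Fin n, mgf (ℓ f ∘ W i) μ (-t))
        ≤ ∏ _i : Fin n, exp (-(t/2) * D f) := by
          apply Finset.prod_le_prod
          · intro i _; exact mgf_nonneg
          · intro i _; rw [hL2 i, hmap f i]; exact key0 f
    _ = exp (-(t/2) * D f) ^ n := by simp
    _ = exp (-(L * D f)) := by
          rw [← Real.exp_nat_mul]; congr 1; rw [hL_def]; ring
  -- per-f exponential moment bound
  have hXmeas : ∀ f, Measurable (X f) := by
    intro f
    apply Measurable.sub measurable_const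
    exact (Finset.measurable_sum Finset.univ (fun i _ => hYmeas f i)).const_mul _
  have hXbdd : ∀ f ω, |X f ω| ≤ 3 * b := by
    intro f ω
    have hs : |∑ i, ℓ f (W i ω)| ≤ n * b := by
      calc |∑ i, ℓ f (W i ω)| ≤ ∑ i, |ℓ f (W i ω)| := Finset.abs_sum_le_sum_abs _ _
      _ ≤ ∑ _i : Fin n, b := Finset.sum_le_sum (fun i _ => hℓbdd f _)
      _ = n * b := by simp [mul_comm]
    have h2 : |(2 / (n:ℝ)) * ∑ i, ℓ f (W i ω)| ≤ 2 * b := by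
      rw [abs_mul, abs_of_pos (by positivity : (0:ℝ) < 2 / n)]
      calc 2 / (n:ℝ) * |∑ i, ℓ f (W i ω)| ≤ 2 / n * (n * b) := by
            apply mul_le_mul_of_nonneg_left hs (by positivity)
      _ = 2 * b := by field_simp
    have hDabs : |D f| ≤ b := abs_le.2 ⟨by linarith [hD0 f], hDb f⟩
    calc |X f ω| ≤ |D f| + |(2 / (n:ℝ)) * ∑ i, ℓ f (W i ω)| := abs_sub _ _
    _ ≤ 3 * b := by linarith
  have keyA : ∀ f, ∫ ω, exp (L * X f ω) ∂μ ≤ 1 := by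
    intro f
    have hEq : ∀ ω, exp (L * X f ω) = exp (L * D f) * exp (-t * ∑ i, ℓ f (W i ω)) := by
      intro ω
      rw [← Real.exp_add]
      congr 1
      have hLt : L * (2 / (n:ℝ)) = t := by
        rw [hL_def]; field_simp
      show L * (D f - (2 / (n:ℝ)) * ∑ i, ℓ f (W i ω)) = L * D f + -t * ∑ i, ℓ f (W i ω)
      linear_combination (-(∑ i, ℓ f (W i ω))) * hLt
    calc ∫ ω, exp (L * X f ω) ∂μ
        = exp (L * D f) * ∫ ω, exp (-t * ∑ i, ℓ f (W i ω)) ∂μ := by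
          rw [← integral_const_mul]; exact integral_congr_ae (Filter.Eventually.of_forall hEq)
    _ ≤ exp (L * D f) * exp (-(L * D f)) := by
          apply mul_le_mul_of_nonneg_left (keysum f) (exp_pos _).le
    _ = 1 := by rw [← Real.exp_add]; simp
  -- final assembly
  set a : ℝ := Real.log (Fintype.card F) / L with ha_def
  have hcard : (1:ℝ) ≤ Fintype.card F := by exact_mod_cast Fintype.card_pos
  have hlog : 0 ≤ Real.log (Fintype.card F) := Real.log_nonneg hcard
  have hexpa : exp (-(L * a)) = ((Fintype.card F : ℝ))⁻¹ := by
    rw [ha_def]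
    have : L * (Real.log (Fintype.card F) / L) = Real.log (Fintype.card F) := by
      field_simp
    rw [this, Real.exp_neg, Real.exp_log (by linarith)]
  set M : Ω → ℝ := fun ω => ⨆ f, X f ω with hM_def
  have hMpt : ∀ ω, M ω ≤ a + (exp (-(L*a)) / L) * ∑ f, exp (L * X f ω) := by
    intro ω
    obtain ⟨g, hg⟩ := Finite.exists_max (fun f => X f ω)
    have hMle : M ω ≤ X g ω := ciSup_le hg
    have h1 : L * (X g ω - a) ≤ exp (L * (X g ω - a)) := by
      have := Real.add_one_le_exp (L * (X g ω - a)); linarith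
    have h2 : exp (L * (X g ω - a)) = exp (-(L*a)) * exp (L * X g ω) := by
      rw [← Real.exp_add]; congr 1; ring
    have h3 : exp (L * X g ω) ≤ ∑ f, exp (L * X f ω) :=
      Finset.single_le_sum (f := fun f => exp (L * X f ω))
        (fun f _ => (exp_pos _).le) (Finset.mem_univ g)
    have h4 : X g ω - a ≤ (exp (-(L*a)) / L) * ∑ f, exp (L * X f ω) := by
      rw [div_mul_eq_mul_div, le_div_iff₀ hL]
      calc (X g ω - a) * L = L * (X g ω - a) := by ring
      _ ≤ exp (L * (X g ω - a)) := h1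
      _ = exp (-(L*a)) * exp (L * X g ω) := h2
      _ ≤ exp (-(L*a)) * ∑ f, exp (L * X f ω) :=
          mul_le_mul_of_nonneg_left h3 (exp_pos _).le
    have h5 : X g ω ≤ a + (exp (-(L*a)) / L) * ∑ f, exp (L * X f ω) := by
      have := sub_le_iff_le_add.mp h4
      linarith only [this]
    exact hMle.trans h5
  have hMmeas : Measurable M := Measurable.iSup (fun f => hXmeas f)
  have hMbdd : ∀ ω, |M ω| ≤ 3 * b := by
    intro ω
    rw [abs_le]
    constructor
    · have := le_ciSup (Set.Finite.bddAbove (Set.finite_range (fun f => X f ω)))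
        (Classical.arbitrary F)
      have h0 := (abs_le.1 (hXbdd (Classical.arbitrary F) ω)).1
      exact le_trans h0 this
    · exact ciSup_le (fun f => (abs_le.1 (hXbdd f ω)).2)
  have hMint : Integrable M μ := integrable_of_abs_le' hMmeas hMbdd
  have hexpint : ∀ f, Integrable (fun ω => exp (L * X f ω)) μ := by
    intro f
    apply integrable_of_abs_le' (((hXmeas f).const_mul L).exp) (B := exp (L * (3*b)))
    intro ω
    rw [abs_of_pos (exp_pos _)]
    apply Real.exp_le_exp.2
    exact mul_le_mul_of_nonneg_left (abs_le.1 (hXbdd f ω)).2 hL.le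
  have hRint : Integrable (fun ω => a + (exp (-(L*a)) / L) * ∑ f, exp (L * X f ω)) μ :=
    (integrable_const a).add
      ((integrable_finset_sum Finset.univ (fun f _ => hexpint f)).const_mul _)
  have hmain : ∫ ω, M ω ∂μ ≤ a + (exp (-(L*a)) / L) * ∑ f : F, ∫ ω, exp (L * X f ω) ∂μ := by
    calc ∫ ω, M ω ∂μ
        ≤ ∫ ω, (a + (exp (-(L*a)) / L) * ∑ f, exp (L * X f ω)) ∂μ :=
          integral_mono hMint hRint hMpt
    _ = a + (exp (-(L*a)) / L) * ∑ f : F, ∫ ω, exp (L * X f ω) ∂μ := by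
          rw [integral_add (integrable_const a)
            ((integrable_finset_sum Finset.univ (fun f _ => hexpint f)).const_mul _),
            integral_const, integral_const_mul,
            integral_finset_sum Finset.univ (fun f _ => hexpint f)]
          simp
  have hsumA : ∑ f : F, ∫ ω, exp (L * X f ω) ∂μ ≤ (Fintype.card F : ℝ) := by
    calc ∑ f : F, ∫ ω, exp (L * X f ω) ∂μ ≤ ∑ _f : F, (1:ℝ) :=
          Finset.sum_le_sum (fun f _ => keyA f)
    _ = (Fintype.card F : ℝ) := by simp
  have hfinal : ∫ ω, M ω ∂μ ≤ a + 1 / L := by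
    calc ∫ ω, M ω ∂μ ≤ a + (exp (-(L*a)) / L) * ∑ f : F, ∫ ω, exp (L * X f ω) ∂μ := hmain
    _ ≤ a + (exp (-(L*a)) / L) * (Fintype.card F : ℝ) := by
          apply add_le_add_right
          exact mul_le_mul_of_nonneg_left hsumA (by positivity)
    _ = a + 1 / L := by
          rw [hexpa]
          congr 1
          have hcard0 : (0:ℝ) < (Fintype.card F : ℝ) := by linarith
          field_simp
  have hgoal_eq : ∫ ω, (⨆ f : F, (D f - (2 / (n : ℝ)) * ∑ i, ℓ f (W i ω))) ∂μ
      = ∫ ω, M ω ∂μ := rfl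
  have hfin2 : a + 1 / L = (2/t) * (Real.log (Fintype.card F) + 1) / n := by
    rw [ha_def, hL_def]
    have h1 : t ≠ 0 := ht.ne'
    have h2 : (n:ℝ) ≠ 0 := hnpos.ne'
    field_simp
  rw [hgoal_eq, ← hfin2]
  exact hfinal
end
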